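/- Signed multiplicity-free expansion of a monomial into back stable slides: for every C ∈ 𝒫_m, x_{C_1}⋯x_{C_m} = Σ_{D ∈ 𝔹_C} (−1)^{|S_C(D)|} · 𝔉⃖(D), an identity of formal power series in the variables (x_i)_{i∈ℤ} (the set 𝔹_C is finite, so the sum is finite). -/

import Mathlib

/-- The back stable slide `𝔉⃖(C)` of a weakly decreasing integer sequence `C`:
the formal power series `∑_{D ≤_m C} x_{D₁}⋯x_{D_m}`, the sum over all weakly
decreasing `D` with `D_i ≤ C_i` for all `i` and `D_i > D_{i+1}` whenever
`C_i > C_{i+1}`, given coefficientwise. -/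
noncomputable def backSlideSeq {m : ℕ} (C : Fin m → ℤ) : MvPowerSeries ℤ ℚ :=
  fun mm => (Nat.card {D : Fin m → ℤ // Antitone D ∧
    (∀ i, D i ≤ C i) ∧
    (∀ i j : Fin m, (j : ℕ) = (i : ℕ) + 1 → C j < C i → D j < D i) ∧
    (∑ i, Finsupp.single (D i) 1) = mm} : ℚ)

/-- Position `i` is the start of a block of `C` (i.e. `i = 0` or `C_{i-1} > C_i`). -/
def IsStart {m : ℕ} (C : Fin m → ℤ) (i : Fin m) : Prop :=
  (i : ℕ) = 0 ∨ ∃ h : Fin m, (i : ℕ) = (h : ℕ) + 1 ∧ C i < C h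

/-- Membership `D ∈ 𝔹_C`: writing `C = M₁^{m₁}⋯M_t^{m_t}` (blocks of equal entries),
`D` is a concatenation of words `X^i ∈ B_i` where each `X^i = x₁⋯x_{m_i}` satisfies
`x_{j+1} ∈ {x_j, x_j − 1}` starting from `x₀ = M_i`, and ends with `x_{m_i} > M_{i+1}`.
Equivalently: at each block start `D_i ∈ {C_i, C_i − 1}`; inside a block
`D_{i+1} ∈ {D_i, D_i − 1}`; and at each block end (followed by a strictly smaller
block value `C_{i+1}`) one has `D_i > C_{i+1}`. -/
def InBC {m : ℕ} (C D : Fin m → ℤ) : Prop :=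
  (∀ i : Fin m, IsStart C i → (D i = C i ∨ D i = C i - 1)) ∧
  (∀ i j : Fin m, (j : ℕ) = (i : ℕ) + 1 → C i = C j → (D j = D i ∨ D j = D i - 1)) ∧
  (∀ i j : Fin m, (j : ℕ) = (i : ℕ) + 1 → C j < C i → C j < D i)

/-- The set `S_C(D)` of positions at which the word `D ∈ 𝔹_C` takes a downward step
(`x_{j+1} = x_j − 1`) relative to its reference (`C_i` at a block start, the previous
entry of `D` inside a block). -/
def SCD {m : ℕ} (C D : Fin m → ℤ) : Set (Fin m) :=
  {i | (IsStart C i ∧ D i = C i - 1) ∨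
       ∃ h : Fin m, (i : ℕ) = (h : ℕ) + 1 ∧ C h = C i ∧ D i = D h - 1}

/-!
Comparing coefficients of `x(E)` for weakly decreasing `E` (which is determined by its
monomial), the identity says that `∑ (−1)^{|S_C(D)|}`, over `D ∈ 𝔹_C` with `E ≤_m D`, is `1` if
`E = C` and `0` otherwise. Membership in `𝔹_C`, the set `S_C(D)` and the relation `E ≤_m D` are
all cut out by conditions on consecutive positions, so the sum can be computed by first summing
over the last letter `d` of `D`. This letter ranges over `{r, r − 1}`, where `r` is the last
entry of `C` at a block start and the previous letter of `D` otherwise, and the two signed terms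
telescope: `[e ≤ r] − [e ≤ r − 1] = [e = r]`. Induction on `m` finishes the proof.
-/

theorem forall_consecutive_iff {n : ℕ} {P : Fin (n + 1) → Fin (n + 1) → Prop} :
    (∀ i j : Fin (n + 1), (j : ℕ) = i + 1 → P i j) ↔ ∀ k : Fin n, P k.castSucc k.succ := by
  refine ⟨fun h k => h _ _ (by simp), fun h i j hij => ?_⟩
  have hi : (i : ℕ) < n := by omega
  convert h ⟨i, hi⟩ <;> ext <;> simp [hij]

theorem finsum_snoc {α M : Type*} [AddCommMonoid M] {n : ℕ} {f : (Fin (n + 1) → α) → M}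
    (hf : f.support.Finite) : ∑ᶠ D, f D = ∑ᶠ (D') (d), f (Fin.snoc D' d) := by
  let e : (Fin n → α) × α ≃ (Fin (n + 1) → α) :=
    (Equiv.prodComm _ _).trans (Fin.snocEquiv fun _ => α)
  rw [← finsum_comp_equiv e, finsum_curry]
  · rfl
  · exact hf.preimage e.injective.injOn

theorem finsum_eq_add_pred {M : Type*} [AddCommMonoid M] {f : ℤ → M} (r : ℤ)
    (hf : ∀ d, d ≠ r → d ≠ r - 1 → f d = 0) : ∑ᶠ d, f d = f r + f (r - 1) := by
  classical
  rw [finsum_eq_sum_of_support_subset f (s := {r, r - 1}), Finset.sum_pair (by omega)]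
  intro d hd
  by_contra h
  simp only [Finset.coe_insert, Finset.coe_singleton, Set.mem_insert_iff,
    Set.mem_singleton_iff, not_or] at h
  exact hd (hf d h.1 h.2)

theorem sum_single_eq_sum_single_iff {m : ℕ} {E F : Fin m → ℤ} (hE : Antitone E)
    (hF : Antitone F) : ∑ i, Finsupp.single (E i) 1 = ∑ i, Finsupp.single (F i) 1 ↔ E = F := by
  refine ⟨fun h => ?_, fun h => h ▸ rfl⟩
  have toMultiset_eq (G : Fin m → ℤ) :
      Finsupp.toMultiset (∑ i, Finsupp.single (G i) 1) = (List.ofFn G : Multiset ℤ) := by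
    rw [← Fin.univ_val_map, map_sum]
    simp only [Finsupp.toMultiset_single, one_nsmul]
    rw [Finset.sum_eq_multiset_sum, ← Multiset.sum_map_singleton (Multiset.map G _),
      Multiset.map_map]
    rfl
  have hperm : (List.ofFn E).Perm (List.ofFn F) := by
    rw [← Multiset.coe_eq_coe, ← toMultiset_eq, ← toMultiset_eq, h]
  exact List.ofFn_injective (hperm.eq_of_sortedGE hE.sortedGE_ofFn hF.sortedGE_ofFn)

/-- The relation `E ≤_m D` of the slide order, without the requirement that `E` be weakly
decreasing. -/
def SlideLE {m : ℕ} (E D : Fin m → ℤ) : Prop :=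
  (∀ i, E i ≤ D i) ∧ ∀ i j : Fin m, (j : ℕ) = i + 1 → D j < D i → E j < E i

/-! In `InBCStep p c a d` and `IsDownStep p c a d`, `p, c` are consecutive entries of `C` and
`a, d` the entries of `D` at the same two positions. -/

def InBCStep (p c a d : ℤ) : Prop :=
  (c < p → d = c ∨ d = c - 1) ∧ (p = c → d = a ∨ d = a - 1) ∧ (c < p → c < a)

def IsDownStep (p c a d : ℤ) : Prop :=
  (c < p ∧ d = c - 1) ∨ (p = c ∧ d = a - 1)

section Local

variable {n : ℕ}

@[simp]
theorem isStart_zero (C : Fin (n + 1) → ℤ) : IsStart C 0 :=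
  Or.inl rfl

@[simp]
theorem isStart_succ (C : Fin (n + 1) → ℤ) (k : Fin n) :
    IsStart C k.succ ↔ C k.succ < C k.castSucc := by
  refine ⟨?_, fun h => Or.inr ⟨k.castSucc, by simp, h⟩⟩
  rintro (h | ⟨h, hh, hlt⟩)
  · simp at h
  · obtain rfl : h = k.castSucc := by
      ext; simp only [Fin.val_succ, Fin.val_castSucc] at hh ⊢; omega
    exact hlt

theorem inBC_iff (C D : Fin (n + 1) → ℤ) :
    InBC C D ↔ (D 0 = C 0 ∨ D 0 = C 0 - 1) ∧
      ∀ k : Fin n, InBCStep (C k.castSucc) (C k.succ) (D k.castSucc) (D k.succ) := by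
  simp only [InBC, InBCStep, Fin.forall_fin_succ (P := fun i => IsStart C i → _), isStart_zero,
    isStart_succ, forall_consecutive_iff (P := fun i j => C i = C j → _),
    forall_consecutive_iff (P := fun i j => C j < C i → _), forall_and, true_imp_iff]
  tauto

@[simp]
theorem zero_mem_SCD (C D : Fin (n + 1) → ℤ) : 0 ∈ SCD C D ↔ D 0 = C 0 - 1 := by
  simp [SCD]

@[simp]
theorem succ_mem_SCD (C D : Fin (n + 1) → ℤ) (k : Fin n) :
    k.succ ∈ SCD C D ↔ IsDownStep (C k.castSucc) (C k.succ) (D k.castSucc) (D k.succ) := by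
  simp only [SCD, Set.mem_ofPred_eq, isStart_succ, IsDownStep]
  constructor
  · rintro (h | ⟨h, hh, hC, hD⟩)
    · exact Or.inl h
    · obtain rfl : h = k.castSucc := by
        ext; simp only [Fin.val_succ, Fin.val_castSucc] at hh ⊢; omega
      exact Or.inr ⟨hC, hD⟩
  · rintro (h | h)
    · exact Or.inl h
    · exact Or.inr ⟨k.castSucc, by simp, h⟩

end Local

section Bounds

variable {m : ℕ} {C D : Fin m → ℤ}

theorem InBC.bounds (hC : Antitone C) (h : InBC C D) (i : Fin m) :
    C i - i - 1 ≤ D i ∧ D i ≤ C i := by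
  obtain ⟨n, rfl⟩ := Nat.exists_eq_succ_of_ne_zero i.pos.ne'
  rw [inBC_iff] at h
  induction i using Fin.induction with
  | zero => rcases h.1 with h0 | h0 <;> simp [h0]
  | succ k ih =>
    obtain ⟨hstart, hsame, -⟩ := h.2 k
    simp only [Fin.val_succ, Fin.val_castSucc, Nat.cast_add, Nat.cast_one] at ih ⊢
    rcases (hC (Fin.castSucc_le_succ k)).lt_or_eq with hlt | heq
    · rcases hstart hlt with h' | h' <;> omega
    · rcases hsame heq.symm with h' | h' <;> omega

theorem InBC.antitone (hC : Antitone C) (h : InBC C D) : Antitone D := by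
  cases m with
  | zero => exact fun i => i.elim0
  | succ n =>
    rw [Fin.antitone_iff_succ_le]
    intro k
    obtain ⟨-, hsame, hend⟩ := ((inBC_iff C D).mp h).2 k
    have hD := (h.bounds hC k.succ).2
    rcases (hC (Fin.castSucc_le_succ k)).lt_or_eq with hlt | heq
    · exact hD.trans (hend hlt).le
    · rcases hsame heq.symm with h' | h' <;> omega

theorem finite_setOf_inBC (hC : Antitone C) : {D : Fin m → ℤ | InBC C D}.Finite :=
  (Set.Finite.pi' fun i => Set.finite_Icc (C i - i - 1) (C i)).subset
    fun _ hD i => hD.bounds hC i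

end Bounds

section Snoc

variable {n : ℕ}

theorem inBC_snoc (C : Fin (n + 2) → ℤ) (D' : Fin (n + 1) → ℤ) (d : ℤ) :
    InBC C (Fin.snoc D' d) ↔ InBC (Fin.init C) D' ∧
      InBCStep (C (Fin.last n).castSucc) (C (Fin.last (n + 1))) (D' (Fin.last n)) d := by
  rw [inBC_iff, inBC_iff, Fin.forall_fin_succ']
  simp [Fin.init, Fin.succ_castSucc, -Fin.castSucc_succ, and_assoc]

theorem slideLE_snoc (E : Fin (n + 2) → ℤ) (D' : Fin (n + 1) → ℤ) (d : ℤ) :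
    SlideLE E (Fin.snoc D' d) ↔ SlideLE (Fin.init E) D' ∧ E (Fin.last (n + 1)) ≤ d ∧
      (d < D' (Fin.last n) → E (Fin.last (n + 1)) < E (Fin.last n).castSucc) := by
  simp only [SlideLE, forall_consecutive_iff (P := fun i j => _ < _ → _)]
  rw [Fin.forall_fin_succ' (P := fun i => E i ≤ _), Fin.forall_fin_succ' (P := fun i => _ → _)]
  simp only [Fin.snoc_castSucc, Fin.snoc_last, Fin.succ_castSucc, Fin.succ_last, Fin.init]
  tauto

theorem card_SCD_eq_sum {m : ℕ} (C D : Fin m → ℤ) [DecidablePred (· ∈ SCD C D)] :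
    Nat.card (SCD C D) = ∑ i, if i ∈ SCD C D then 1 else 0 := by
  rw [Finset.sum_boole, Nat.cast_id, ← Fintype.card_subtype, Nat.card_eq_fintype_card]

theorem castSucc_mem_SCD_snoc (C : Fin (n + 2) → ℤ) (D' : Fin (n + 1) → ℤ) (d : ℤ)
    (i : Fin (n + 1)) : i.castSucc ∈ SCD C (Fin.snoc D' d) ↔ i ∈ SCD (Fin.init C) D' := by
  cases i using Fin.cases with
  | zero => simp [Fin.init]
  | succ k =>
    rw [← Fin.succ_castSucc, succ_mem_SCD, succ_mem_SCD]
    simp [Fin.init, Fin.succ_castSucc, -Fin.castSucc_succ]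

theorem card_SCD_snoc (C : Fin (n + 2) → ℤ) (D' : Fin (n + 1) → ℤ) (d : ℤ)
    [Decidable (IsDownStep (C (Fin.last n).castSucc) (C (Fin.last (n + 1))) (D' (Fin.last n)) d)] :
    Nat.card (SCD C (Fin.snoc D' d)) = Nat.card (SCD (Fin.init C) D') +
      if IsDownStep (C (Fin.last n).castSucc) (C (Fin.last (n + 1))) (D' (Fin.last n)) d
      then 1 else 0 := by
  classical
  have hlast := succ_mem_SCD C (Fin.snoc D' d) (Fin.last n)
  rw [Fin.succ_last, Fin.snoc_castSucc, Fin.snoc_last] at hlast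
  rw [card_SCD_eq_sum, card_SCD_eq_sum, Fin.sum_univ_castSucc]
  simp only [castSucc_mem_SCD_snoc, hlast]

end Snoc

open Classical in
/-- The coefficient of `x(E)`, for weakly decreasing `E`, in the term
`(−1)^{|S_C(D)|} • 𝔉⃖(D)` of the expansion, extended by zero to `D ∉ 𝔹_C`. -/
noncomputable def termCoeff {m : ℕ} (C E D : Fin m → ℤ) : ℚ :=
  if InBC C D ∧ SlideLE E D then (-1) ^ Nat.card (SCD C D) else 0

open Classical in
/-- The factor by which a last letter `d` of `D` changes `termCoeff`, where `(p, c)`, `(q, e)` and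
`(a, d)` are the last two entries of `C`, `E` and `D`. -/
noncomputable def lastWeight (p c q e a d : ℤ) : ℚ :=
  if InBCStep p c a d ∧ e ≤ d ∧ (d < a → e < q) then (if IsDownStep p c a d then -1 else 1)
  else 0

theorem termCoeff_snoc {n : ℕ} (C E : Fin (n + 2) → ℤ) (D' : Fin (n + 1) → ℤ) (d : ℤ) :
    termCoeff C E (Fin.snoc D' d) = termCoeff (Fin.init C) (Fin.init E) D' *
      lastWeight (C (Fin.last n).castSucc) (C (Fin.last (n + 1))) (E (Fin.last n).castSucc)
        (E (Fin.last (n + 1))) (D' (Fin.last n)) d := by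
  classical
  simp only [termCoeff, lastWeight, inBC_snoc, slideLE_snoc, card_SCD_snoc, pow_add]
  split_ifs <;> first | tauto | simp

/-- A single letter behaves like a last letter that starts a new block after a letter larger
than everything in sight. -/
theorem termCoeff_fin_one (C E D : Fin 1 → ℤ) :
    termCoeff C E D = lastWeight (C 0 + 1) (C 0) (max (C 0) (E 0) + 1) (E 0)
      (max (C 0) (E 0) + 1) (D 0) := by
  classical
  rw [termCoeff, card_SCD_eq_sum, Fin.sum_univ_one]
  simp [lastWeight, inBC_iff, SlideLE, InBCStep, IsDownStep]

theorem finsum_lastWeight {p c q e a : ℤ} (hcp : c ≤ p) (heq : e ≤ q) (hqa : q ≤ a) :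
    ∑ᶠ d, lastWeight p c q e a d =
      if c < p then (if e = c ∧ e < q then 1 else 0) else if e = q then 1 else 0 := by
  rcases hcp.lt_or_eq with hcp | rfl
  · rw [finsum_eq_add_pred c fun d h₁ h₂ => by simp [lastWeight, InBCStep, hcp, h₁, h₂]]
    simp only [lastWeight, InBCStep, IsDownStep]
    split_ifs <;> grind
  · rw [finsum_eq_add_pred a fun d h₁ h₂ => by simp [lastWeight, InBCStep, h₁, h₂]]
    simp only [lastWeight, InBCStep, IsDownStep]
    split_ifs <;> grind

theorem support_termCoeff_finite {m : ℕ} {C : Fin m → ℤ} (hC : Antitone C) (E : Fin m → ℤ) :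
    (Function.support (termCoeff C E)).Finite :=
  (finite_setOf_inBC hC).subset fun D hD => by
    by_contra h
    exact hD (by simp [termCoeff, show ¬InBC C D from h])

theorem finsum_termCoeff : ∀ {m : ℕ} (C E : Fin m → ℤ), Antitone C → Antitone E →
    ∑ᶠ D, termCoeff C E D = if E = C then 1 else 0
  | 0, C, E, _, _ => by
    simp [finsum_unique, termCoeff, InBC, SlideLE, SCD, Subsingleton.elim E C]
  | 1, C, E, _, _ => by
    rw [← finsum_comp_equiv (Equiv.funUnique (Fin 1) ℤ).symm]
    simp only [Equiv.funUnique_symm_apply, termCoeff_fin_one, uniqueElim_const]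
    rw [finsum_lastWeight (by omega) (by omega) le_rfl]
    simp [funext_iff, Fin.forall_fin_one]
  | n + 2, C, E, hC, hE => by
    have ih := finsum_termCoeff (Fin.init C) (Fin.init E)
      (hC.comp_monotone Fin.strictMono_castSucc.monotone)
      (hE.comp_monotone Fin.strictMono_castSucc.monotone)
    set c := C (Fin.last (n + 1))
    set p := C (Fin.last n).castSucc
    set e := E (Fin.last (n + 1))
    set q := E (Fin.last n).castSucc
    have hcp : c ≤ p := hC (Fin.castSucc_le_succ _)
    have heq : e ≤ q := hE (Fin.castSucc_le_succ _)
    have hEC : E = C ↔ Fin.init E = Fin.init C ∧ e = c := by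
      conv_lhs => rw [← Fin.snoc_init_self E, ← Fin.snoc_init_self C]
      exact Fin.snoc_inj
    calc ∑ᶠ D, termCoeff C E D = ∑ᶠ (D') (d), termCoeff C E (Fin.snoc D' d) :=
          finsum_snoc (support_termCoeff_finite hC E)
      _ = ∑ᶠ D', termCoeff (Fin.init C) (Fin.init E) D' *
            if c < p then (if e = c ∧ e < q then 1 else 0) else if e = q then 1 else 0 := by
          refine finsum_congr fun D' => ?_
          simp_rw [termCoeff_snoc, ← mul_finsum]
          by_cases h0 : termCoeff (Fin.init C) (Fin.init E) D' = 0
          · simp [h0]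
          · have hslide : SlideLE (Fin.init E) D' := by
              by_contra h
              simp [termCoeff, h] at h0
            rw [finsum_lastWeight hcp heq (hslide.1 (Fin.last n))]
      _ = if E = C then 1 else 0 := by
          rw [← finsum_mul, ih]
          by_cases hinit : Fin.init E = Fin.init C
          · have hqp : q = p := congrFun hinit (Fin.last n)
            simp only [hEC, hinit, true_and, if_true, one_mul]
            split_ifs <;> first | rfl | omega
          · simp [hEC, hinit]

section Coeff

variable {m : ℕ} (D : Fin m → ℤ)

open Classical in
theorem coeff_backSlideSeq_sum_single {E : Fin m → ℤ} (hE : Antitone E) :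
    MvPowerSeries.coeff (∑ i, Finsupp.single (E i) 1) (backSlideSeq D) =
      if SlideLE E D then 1 else 0 := by
  have hfiber (F : Fin m → ℤ) : (Antitone F ∧ (∀ i, F i ≤ D i) ∧
      (∀ i j : Fin m, (j : ℕ) = i + 1 → D j < D i → F j < F i) ∧
      ∑ i, Finsupp.single (F i) 1 = ∑ i, Finsupp.single (E i) 1) ↔ F = E ∧ SlideLE E D := by
    constructor
    · rintro ⟨hF, hle, hstrict, hsum⟩
      obtain rfl := (sum_single_eq_sum_single_iff hF hE).mp hsum
      exact ⟨rfl, hle, hstrict⟩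
    · rintro ⟨rfl, hle, hstrict⟩
      exact ⟨hE, hle, hstrict, rfl⟩
  rw [MvPowerSeries.coeff_apply, backSlideSeq]
  simp only [hfiber]
  split_ifs with h <;> simp [h]

theorem coeff_backSlideSeq_eq_zero {μ : ℤ →₀ ℕ}
    (hμ : ¬∃ E : Fin m → ℤ, Antitone E ∧ ∑ i, Finsupp.single (E i) 1 = μ) :
    MvPowerSeries.coeff μ (backSlideSeq D) = 0 := by
  rw [MvPowerSeries.coeff_apply, backSlideSeq, Nat.cast_eq_zero, Nat.card_eq_zero]
  exact Or.inl ⟨fun ⟨F, hF, _, _, hsum⟩ => hμ ⟨F, hF, hsum⟩⟩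

end Coeff

theorem monomial_into_backSlides_general (m : ℕ) (C : Fin m → ℤ) (hC : Antitone C) :
    (MvPowerSeries.monomial (∑ i, Finsupp.single (C i) 1) 1 : MvPowerSeries ℤ ℚ) =
      ∑ᶠ D ∈ {D : Fin m → ℤ | Antitone D ∧ InBC C D},
        ((-1 : ℚ) ^ (Nat.card (SCD C D))) • backSlideSeq D := by
  ext μ
  rw [MvPowerSeries.coeff_monomial, ← AddMonoidHom.coe_coe, AddMonoidHom.map_finsum_mem _ _
    ((finite_setOf_inBC hC).subset fun _ hD => hD.2), AddMonoidHom.coe_coe]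
  by_cases hμ : ∃ E : Fin m → ℤ, Antitone E ∧ ∑ i, Finsupp.single (E i) 1 = μ
  · obtain ⟨E, hE, rfl⟩ := hμ
    have hterm (D : Fin m → ℤ) :
        Set.indicator {D | Antitone D ∧ InBC C D}
          (fun D => MvPowerSeries.coeff (∑ i, Finsupp.single (E i) 1)
            (((-1 : ℚ) ^ (Nat.card (SCD C D))) • backSlideSeq D)) D = termCoeff C E D := by
      by_cases hD : InBC C D
      · rw [Set.indicator_of_mem (show D ∈ {D | Antitone D ∧ InBC C D} from
          ⟨hD.antitone hC, hD⟩)]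
        by_cases hS : SlideLE E D <;>
          simp [termCoeff, coeff_backSlideSeq_sum_single D hE, hD, hS]
      · rw [Set.indicator_of_notMem fun h => hD h.2]
        simp [termCoeff, hD]
    simp only [finsum_mem_def, hterm, finsum_termCoeff C E hC hE,
      sum_single_eq_sum_single_iff hE hC]
  · have hCμ : ∑ i, Finsupp.single (C i) 1 ≠ μ := fun h => hμ ⟨C, hC, h⟩
    simp [coeff_backSlideSeq_eq_zero _ hμ, hCμ.symm]

/-- **Signed multiplicity-free expansion of a monomial into back stable slides**:
for every weakly decreasing integer sequence `C = (C₁,…,C_m)`,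
`x_{C₁}⋯x_{C_m} = ∑_{D ∈ 𝔹_C} (−1)^{|S_C(D)|} · 𝔉⃖(D)` (the set `𝔹_C` is finite, so
the sum is finite). -/
theorem monomial_into_backSlides (m : ℕ) (hm : 1 ≤ m) (C : Fin m → ℤ) (hC : Antitone C) :
    (MvPowerSeries.monomial (∑ i, Finsupp.single (C i) 1) 1 : MvPowerSeries ℤ ℚ) =
      ∑ᶠ D ∈ {D : Fin m → ℤ | Antitone D ∧ InBC C D},
        ((-1 : ℚ) ^ (Nat.card (SCD C D))) • backSlideSeq D :=
  monomial_into_backSlides_general m C hC
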